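/- arXiv:hep-th/0003243 — 5 statements merged into one kernel-verified Lean document; each statement's English description precedes it below -/
import Mathlib

section
/- Let M be a von Neumann algebra on a complex Hilbert space H with commutant M′, and let Ω ∈ H be cyclic both for M and for M′. Let Φ, Φ′ ∈ H and suppose there exists a sequence (Fₙ) of elements of M such that FₙΩ → Φ and Fₙ*Ω → Φ′ in norm. Then there exists a closed, densely defined linear operator F on H such that: (i) for every A′ ∈ M′ the vector A′Ω lies in the domain of F and F(A′Ω) = A′Φ; in particular Ω is in the domain of F and FΩ = Φ; (ii) Ω is in the domain of the adjoint F* and F*Ω = Φ′; (iii) F is affiliated with M, i.e. for every A′ ∈ M′ and every ψ in the domain of F, A′ψ lies in the domain of F and F(A′ψ) = A′(Fψ); and (iv) F* is affiliated with M in the same sense. -/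
open Filter Topology

/-!
`F` is the closure of `A'Ω ↦ A'Φ` (`A' ∈ M'`): its graph is the closure of `{(A'Ω, A'Φ)}`.
Letting `n → ∞` in `⟪B'Ω, A'FₙΩ⟫ = ⟪B'Fₙ*Ω, A'Ω⟫` gives `⟪B'Ω, A'Φ⟫ = ⟪B'Φ', A'Ω⟫`, so
`B'Ω ↦ B'Φ'` is formally adjoint to `A'Ω ↦ A'Φ`. As the vectors `B'Ω` are total, the closed
relation has no vertical part, so it is the graph of an operator, and `F*(B'Ω) = B'Φ'`.
Each `A' ∈ M'`, acting diagonally, preserves the graph, so `F` is affiliated with `M`;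
since `M'` is closed under adjoints, so is `F*`.
-/

open scoped InnerProductSpace

/-- `Ω` is a cyclic vector for the set `N` of bounded operators on `H`:
the linear span of `{A Ω : A ∈ N}` is dense in `H`. -/
def IsCyclicVector {H : Type*} [NormedAddCommGroup H] [InnerProductSpace ℂ H]
    (N : Set (H →L[ℂ] H)) (Ω : H) : Prop :=
  Dense ((Submodule.span ℂ ((fun A : H →L[ℂ] H => A Ω) '' N) : Submodule ℂ H) : Set H)

namespace LinearPMap

section Commutation

variable {R E F : Type*} [Ring R] [AddCommGroup E] [Module R E] [AddCommGroup F] [Module R F]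

theorem exists_apply_eq_of_mem_graph {f : E →ₗ.[R] F} {x : E} {y : F} (h : (x, y) ∈ f.graph) :
    ∃ hx : x ∈ f.domain, f ⟨x, hx⟩ = y :=
  ⟨mem_domain_of_mem_graph h, ((image_iff _).2 h).symm⟩

variable [TopologicalSpace E]

def CommutesWith (f : E →ₗ.[R] E) (A : E →L[R] E) : Prop :=
  ∀ ψ (hψ : ψ ∈ f.domain), ∃ h : A ψ ∈ f.domain, f ⟨A ψ, h⟩ = A (f ⟨ψ, hψ⟩)

theorem commutesWith_of_graph_mem_invtSubmodule {f : E →ₗ.[R] E} {A : E →L[R] E}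
    (h : f.graph ∈ Module.End.invtSubmodule (A.prodMap A : E × E →L[R] E × E)) :
    f.CommutesWith A := fun ψ hψ =>
  exists_apply_eq_of_mem_graph (h (f.mem_graph ⟨ψ, hψ⟩))

end Commutation

section Adjoint

variable {𝕜 E F : Type*} [RCLike 𝕜] [NormedAddCommGroup E] [InnerProductSpace 𝕜 E]
  [NormedAddCommGroup F] [InnerProductSpace 𝕜 F] [CompleteSpace E]

theorem exists_mem_adjoint_domain_apply_eq {T : E →ₗ.[𝕜] F} (hT : Dense (T.domain : Set E))
    {y : F} {w : E} (h : ∀ x : T.domain, ⟪w, x⟫_𝕜 = ⟪y, T x⟫_𝕜) :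
    ∃ hy : y ∈ T†.domain, T† ⟨y, hy⟩ = w :=
  have hy := mem_adjoint_domain_of_exists y ⟨w, h⟩
  ⟨hy, adjoint_apply_eq hT ⟨y, hy⟩ h⟩

theorem CommutesWith.adjoint {f : E →ₗ.[𝕜] E} (hf : Dense (f.domain : Set E)) {A : E →L[𝕜] E}
    (h : f.CommutesWith (ContinuousLinearMap.adjoint A)) : f†.CommutesWith A := by
  intro φ hφ
  refine exists_mem_adjoint_domain_apply_eq hf fun x => ?_
  obtain ⟨hAx, hfAx⟩ := h x x.2
  calc ⟪A (f† ⟨φ, hφ⟩), x⟫_𝕜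
      = ⟪f† ⟨φ, hφ⟩, ContinuousLinearMap.adjoint A x⟫_𝕜 :=
        (ContinuousLinearMap.adjoint_inner_right A _ x).symm
    _ = ⟪φ, f ⟨ContinuousLinearMap.adjoint A x, hAx⟩⟫_𝕜 :=
        adjoint_isFormalAdjoint hf ⟨φ, hφ⟩ ⟨_, hAx⟩
    _ = ⟪A φ, f x⟫_𝕜 := by
        rw [hfAx, ContinuousLinearMap.adjoint_inner_right]

end Adjoint

section Affiliation

variable {H : Type*} [NormedAddCommGroup H] [InnerProductSpace ℂ H] [CompleteSpace H]

def IsAffiliatedWith (f : H →ₗ.[ℂ] H) (M : VonNeumannAlgebra H) : Prop :=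
  ∀ A' ∈ M.commutant, f.CommutesWith A'

theorem IsAffiliatedWith.adjoint {f : H →ₗ.[ℂ] H} {M : VonNeumannAlgebra H}
    (hf : f.IsAffiliatedWith M) (hd : Dense (f.domain : Set H)) : f†.IsAffiliatedWith M :=
  fun A' hA' => CommutesWith.adjoint hd <| hf _ <| by
    simpa only [ContinuousLinearMap.star_eq_adjoint] using star_mem hA'

end Affiliation

end LinearPMap

theorem Submodule.snd_eq_zero_of_dense_span_inner {𝕜 E F : Type*} [RCLike 𝕜]
    [NormedAddCommGroup E] [InnerProductSpace 𝕜 E] [NormedAddCommGroup F] [InnerProductSpace 𝕜 F]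
    {G : Submodule 𝕜 (E × F)} {D : Set F} (hD : Dense (Submodule.span 𝕜 D : Set F))
    (hG : ∀ u ∈ D, ∃ v : E, ∀ p ∈ G, ⟪u, p.2⟫_𝕜 = ⟪v, p.1⟫_𝕜)
    (p : E × F) (hp : p ∈ G) (h1 : p.1 = 0) : p.2 = 0 := by
  have hspan : Submodule.span 𝕜 D ≤ LinearMap.ker (innerₛₗ 𝕜 p.2) := by
    rw [Submodule.span_le]
    intro u hu
    obtain ⟨v, hv⟩ := hG u hu
    simp [← inner_conj_symm p.2, hv p hp, h1]
  exact hD.eq_zero_of_inner_left 𝕜 fun w hw => hspan hw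

section OrbitGraph

variable {𝕜 E : Type*} [NontriviallyNormedField 𝕜] [NormedAddCommGroup E] [NormedSpace 𝕜 E]

def orbitGraph (S : Set (E →L[𝕜] E)) (Ω Φ : E) : Submodule 𝕜 (E × E) :=
  (Submodule.span 𝕜 ((fun A : E →L[𝕜] E => (A Ω, A Φ)) '' S)).topologicalClosure

theorem apply_mem_orbitGraph {S : Set (E →L[𝕜] E)} {A : E →L[𝕜] E} (hA : A ∈ S) (Ω Φ : E) :
    (A Ω, A Φ) ∈ orbitGraph S Ω Φ :=
  Submodule.le_topologicalClosure _ (Submodule.subset_span ⟨A, hA, rfl⟩)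

theorem orbitGraph_mem_invtSubmodule {S : Set (E →L[𝕜] E)} {A : E →L[𝕜] E}
    (hA : ∀ B ∈ S, A * B ∈ S) (Ω Φ : E) :
    orbitGraph S Ω Φ ∈ Module.End.invtSubmodule (A.prodMap A : E × E →L[𝕜] E × E) := by
  apply Submodule.topologicalClosure_mem_invtSubmodule
  rw [Module.End.mem_invtSubmodule_iff_map_le, Submodule.map_span, Submodule.span_le]
  rintro _ ⟨_, ⟨B, hB, rfl⟩, rfl⟩
  exact Submodule.subset_span ⟨A * B, hA B hB, rfl⟩

end OrbitGraph

theorem inner_snd_eq_of_mem_orbitGraph {𝕜 E : Type*} [RCLike 𝕜] [NormedAddCommGroup E]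
    [InnerProductSpace 𝕜 E] {S : Set (E →L[𝕜] E)} {Ω Φ u v : E}
    (h : ∀ A ∈ S, ⟪u, A Φ⟫_𝕜 = ⟪v, A Ω⟫_𝕜) {p : E × E} (hp : p ∈ orbitGraph S Ω Φ) :
    ⟪u, p.2⟫_𝕜 = ⟪v, p.1⟫_𝕜 :=
  ContinuousLinearMap.eqOn_closure_span
    (f := (innerSL 𝕜 u).comp (ContinuousLinearMap.snd 𝕜 E E))
    (g := (innerSL 𝕜 v).comp (ContinuousLinearMap.fst 𝕜 E E))
    (by rintro _ ⟨A, hA, rfl⟩; exact h A hA) hp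

section VonNeumann

variable {H : Type*} [NormedAddCommGroup H] [InnerProductSpace ℂ H] [CompleteSpace H]
  {M : VonNeumannAlgebra H}

theorem VonNeumannAlgebra.inner_apply_eq_inner_adjoint_apply {F A' B' : H →L[ℂ] H} (hF : F ∈ M)
    (hA' : A' ∈ M.commutant) (hB' : B' ∈ M.commutant) (x : H) :
    ⟪B' x, A' (F x)⟫_ℂ = ⟪B' (ContinuousLinearMap.adjoint F x), A' x⟫_ℂ := by
  have hFA : F (A' x) = A' (F x) :=
    DFunLike.congr_fun (VonNeumannAlgebra.mem_commutant_iff.1 hA' F hF) x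
  have hFB : ContinuousLinearMap.adjoint F (B' x) = B' (ContinuousLinearMap.adjoint F x) :=
    DFunLike.congr_fun (VonNeumannAlgebra.mem_commutant_iff.1 hB' _ (star_mem hF)) x
  rw [← hFA, ← hFB]
  exact (ContinuousLinearMap.adjoint_inner_left F _ _).symm

theorem VonNeumannAlgebra.inner_apply_eq_of_tendsto {Ω Φ Φ' : H} {Fseq : ℕ → H →L[ℂ] H}
    (hFmem : ∀ n, Fseq n ∈ M) (hΦ : Tendsto (fun n => Fseq n Ω) atTop (𝓝 Φ))
    (hΦ' : Tendsto (fun n => ContinuousLinearMap.adjoint (Fseq n) Ω) atTop (𝓝 Φ'))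
    {A' B' : H →L[ℂ] H} (hA' : A' ∈ M.commutant) (hB' : B' ∈ M.commutant) :
    ⟪B' Ω, A' Φ⟫_ℂ = ⟪B' Φ', A' Ω⟫_ℂ :=
  tendsto_nhds_unique
    ((tendsto_const_nhds.inner ((A'.continuous.tendsto Φ).comp hΦ)).congr fun n =>
      inner_apply_eq_inner_adjoint_apply (hFmem n) hA' hB' Ω)
    (((B'.continuous.tendsto Φ').comp hΦ').inner tendsto_const_nhds)

end VonNeumann

theorem exists_closed_affiliated_operator_general
    {H : Type*} [NormedAddCommGroup H] [InnerProductSpace ℂ H] [CompleteSpace H]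
    (M : VonNeumannAlgebra H) (Ω : H)
    (hcycM' : IsCyclicVector (M.commutant : Set (H →L[ℂ] H)) Ω)
    (Φ Φ' : H)
    (Fseq : ℕ → H →L[ℂ] H) (hFmem : ∀ n, Fseq n ∈ M)
    (hΦ : Tendsto (fun n => Fseq n Ω) atTop (𝓝 Φ))
    (hΦ' : Tendsto (fun n => (ContinuousLinearMap.adjoint (Fseq n)) Ω) atTop (𝓝 Φ')) :
    ∃ F : H →ₗ.[ℂ] H,
      Dense (F.domain : Set H) ∧ F.IsClosed ∧
      -- (i) for every `A′ ∈ M′`, `A′Ω` lies in the domain of `F` and `F(A′Ω) = A′Φ`;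
      (∀ A' ∈ M.commutant, ∃ h : A' Ω ∈ F.domain, F ⟨A' Ω, h⟩ = A' Φ) ∧
      -- in particular `Ω` is in the domain of `F` and `FΩ = Φ`;
      (∃ hΩ : Ω ∈ F.domain, F ⟨Ω, hΩ⟩ = Φ) ∧
      -- (ii) `Ω` is in the domain of the adjoint `F*` and `F*Ω = Φ′`;
      (∃ hΩ' : Ω ∈ F.adjoint.domain, F.adjoint ⟨Ω, hΩ'⟩ = Φ') ∧
      -- (iii) `F` is affiliated with `M`;
      (∀ A' ∈ M.commutant, ∀ ψ (hψ : ψ ∈ F.domain),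
          ∃ h : A' ψ ∈ F.domain, F ⟨A' ψ, h⟩ = A' (F ⟨ψ, hψ⟩)) ∧
      -- (iv) `F*` is affiliated with `M` in the same sense.
      (∀ A' ∈ M.commutant, ∀ φ (hφ : φ ∈ F.adjoint.domain),
          ∃ h : A' φ ∈ F.adjoint.domain, F.adjoint ⟨A' φ, h⟩ = A' (F.adjoint ⟨φ, hφ⟩)) := by
  set G := orbitGraph (M.commutant : Set (H →L[ℂ] H)) Ω Φ
  have hG : ∀ B' ∈ M.commutant, ∀ p ∈ G, ⟪B' Ω, p.2⟫_ℂ = ⟪B' Φ', p.1⟫_ℂ := fun B' hB' _ =>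
    inner_snd_eq_of_mem_orbitGraph fun A' hA' =>
      VonNeumannAlgebra.inner_apply_eq_of_tendsto hFmem hΦ hΦ' hA' hB'
  set F := G.toLinearPMap
  have hFG : F.graph = G := Submodule.toLinearPMap_graph_eq G <|
    Submodule.snd_eq_zero_of_dense_span_inner hcycM' <| by
      rintro _ ⟨B', hB', rfl⟩
      exact ⟨B' Φ', hG B' hB'⟩
  have hF : ∀ A' ∈ M.commutant, ∃ h : A' Ω ∈ F.domain, F ⟨A' Ω, h⟩ = A' Φ := fun A' hA' =>
    LinearPMap.exists_apply_eq_of_mem_graph (hFG ▸ apply_mem_orbitGraph hA' Ω Φ)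
  have hdense : Dense (F.domain : Set H) := hcycM'.mono <| Submodule.span_le.2 <| by
    rintro _ ⟨A', hA', rfl⟩
    exact (hF A' hA').1
  have hFadj : ∀ B' ∈ M.commutant,
      ∃ h : B' Ω ∈ F.adjoint.domain, F.adjoint ⟨B' Ω, h⟩ = B' Φ' := fun B' hB' =>
    LinearPMap.exists_mem_adjoint_domain_apply_eq hdense fun x =>
      (hG B' hB' _ (hFG ▸ F.mem_graph x)).symm
  have haff : F.IsAffiliatedWith M := fun A' hA' =>
    LinearPMap.commutesWith_of_graph_mem_invtSubmodule <| hFG ▸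
      orbitGraph_mem_invtSubmodule (fun _ hB' => mul_mem hA' hB') Ω Φ
  refine ⟨F, hdense, ?_, hF, by simpa using hF 1 (one_mem _), by simpa using hFadj 1 (one_mem _),
    haff, haff.adjoint hdense⟩
  rw [LinearPMap.IsClosed, hFG]
  exact Submodule.isClosed_topologicalClosure _

/-- Lemma 2.2 of the paper: if `Ω` is cyclic for a von Neumann algebra `M` and for its
commutant `M′`, and if `Φ, Φ′` are norm limits of `Fₙ Ω`, `Fₙ* Ω` for a sequence `Fₙ ∈ M`,
then there is a closed, densely defined operator `F` with `F(A′Ω) = A′Φ` for all `A′ ∈ M′`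
(in particular `FΩ = Φ`), with `Ω` in the domain of `F*` and `F*Ω = Φ′`, and such that both
`F` and `F*` are affiliated with `M`. -/
theorem exists_closed_affiliated_operator
    {H : Type*} [NormedAddCommGroup H] [InnerProductSpace ℂ H] [CompleteSpace H]
    (M : VonNeumannAlgebra H) (Ω : H)
    (hcycM : IsCyclicVector (M : Set (H →L[ℂ] H)) Ω)
    (hcycM' : IsCyclicVector (M.commutant : Set (H →L[ℂ] H)) Ω)
    (Φ Φ' : H)
    (Fseq : ℕ → H →L[ℂ] H) (hFmem : ∀ n, Fseq n ∈ M)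
    (hΦ : Tendsto (fun n => Fseq n Ω) atTop (𝓝 Φ))
    (hΦ' : Tendsto (fun n => (ContinuousLinearMap.adjoint (Fseq n)) Ω) atTop (𝓝 Φ')) :
    ∃ F : H →ₗ.[ℂ] H,
      Dense (F.domain : Set H) ∧ F.IsClosed ∧
      -- (i) for every `A′ ∈ M′`, `A′Ω` lies in the domain of `F` and `F(A′Ω) = A′Φ`;
      (∀ A' ∈ M.commutant, ∃ h : A' Ω ∈ F.domain, F ⟨A' Ω, h⟩ = A' Φ) ∧
      -- in particular `Ω` is in the domain of `F` and `FΩ = Φ`;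
      (∃ hΩ : Ω ∈ F.domain, F ⟨Ω, hΩ⟩ = Φ) ∧
      -- (ii) `Ω` is in the domain of the adjoint `F*` and `F*Ω = Φ′`;
      (∃ hΩ' : Ω ∈ F.adjoint.domain, F.adjoint ⟨Ω, hΩ'⟩ = Φ') ∧
      -- (iii) `F` is affiliated with `M`;
      (∀ A' ∈ M.commutant, ∀ ψ (hψ : ψ ∈ F.domain),
          ∃ h : A' ψ ∈ F.domain, F ⟨A' ψ, h⟩ = A' (F ⟨ψ, hψ⟩)) ∧
      -- (iv) `F*` is affiliated with `M` in the same sense.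
      (∀ A' ∈ M.commutant, ∀ φ (hφ : φ ∈ F.adjoint.domain),
          ∃ h : A' φ ∈ F.adjoint.domain, F.adjoint ⟨A' φ, h⟩ = A' (F.adjoint ⟨φ, hφ⟩)) :=
  exists_closed_affiliated_operator_general M Ω hcycM' Φ Φ' Fseq hFmem hΦ hΦ'
end

section
/- Fix an integer d ≥ 2 and let W = {x ∈ ℝ^d : x 1 > |x 0|} be the open right wedge. Let Γ_a, Γ_b ⊆ ℝ^d be compact sets such that Γ_b − Γ_a := {b − a : a ∈ Γ_a, b ∈ Γ_b} ⊆ W. Then there exists δ > 0 such that for every t > 0, all a ∈ Γ_a, b ∈ Γ_b and all w ∈ W, the points t·a and w + t·b are spacelike separated and ‖t·a − (w + t·b)‖ ≥ t·δ, where ‖·‖ is the Euclidean norm on ℝ^d. In other words, the sets t·Γ_a and W + t·Γ_b are spacelike separated and their distance grows at least linearly in t. -/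
/-! The wedge is the positivity set of the margin `m x = x₁ - |x₀|`, which is superadditive and
positively homogeneous. By compactness `m(b - a) ≥ δ > 0` on `Γ_b - Γ_a`, so the separating
vector `v = w + t(b - a)` has `m v ≥ m w + t δ > t δ`. A vector with `m v > 0` is spacelike, and
`‖v‖ ≥ |v₁| ≥ m v`. -/

open Finset

namespace EuclideanSpace

variable {ι : Type*} (i₀ i₁ : ι)

def wedgeMargin (x : EuclideanSpace ℝ ι) : ℝ := x i₁ - |x i₀|

theorem continuous_wedgeMargin : Continuous (wedgeMargin (ι := ι) i₀ i₁) :=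
  (proj i₁).continuous.sub (proj i₀).continuous.abs

theorem wedgeMargin_add_le (x y : EuclideanSpace ℝ ι) :
    wedgeMargin i₀ i₁ x + wedgeMargin i₀ i₁ y ≤ wedgeMargin i₀ i₁ (x + y) := by
  simp only [wedgeMargin, PiLp.add_apply]
  linarith [abs_add_le (x i₀) (y i₀)]

theorem wedgeMargin_smul {t : ℝ} (ht : 0 ≤ t) (x : EuclideanSpace ℝ ι) :
    wedgeMargin i₀ i₁ (t • x) = t * wedgeMargin i₀ i₁ x := by
  simp only [wedgeMargin, PiLp.smul_apply, smul_eq_mul, abs_mul, abs_of_nonneg ht]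
  ring

theorem wedgeMargin_le_norm [Fintype ι] (x : EuclideanSpace ℝ ι) : wedgeMargin i₀ i₁ x ≤ ‖x‖ :=
  calc wedgeMargin i₀ i₁ x ≤ |x i₁| := by
        unfold wedgeMargin; linarith [le_abs_self (x i₁), abs_nonneg (x i₀)]
    _ ≤ ‖x‖ := PiLp.norm_apply_le x i₁

theorem sq_lt_sum_erase_sq_of_wedgeMargin_pos [Fintype ι] [DecidableEq ι] {i₀ i₁ : ι} (h : i₁ ≠ i₀)
    {x : EuclideanSpace ℝ ι} (hx : 0 < wedgeMargin i₀ i₁ x) :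
    x i₀ ^ 2 < ∑ j ∈ univ.erase i₀, x j ^ 2 :=
  calc x i₀ ^ 2 = |x i₀| ^ 2 := (sq_abs _).symm
    _ < x i₁ ^ 2 := by
        unfold wedgeMargin at hx
        exact pow_lt_pow_left₀ (by linarith) (abs_nonneg _) two_ne_zero
    _ ≤ ∑ j ∈ univ.erase i₀, x j ^ 2 :=
        single_le_sum (fun j _ => sq_nonneg (x j)) (mem_erase.mpr ⟨h, mem_univ i₁⟩)

end EuclideanSpace

open EuclideanSpace

/-- Geometric separation property from Section 3 of the paper: if `Γ_a, Γ_b` are compact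
sets with `Γ_b − Γ_a` contained in the open right wedge `W = {x : x₁ > |x₀|}`, then there
is a `δ > 0` such that for all `t > 0` the sets `t·Γ_a` and `W + t·Γ_b` are spacelike
separated and their (Euclidean) distance is at least `t·δ`. -/
theorem precursor_spacelike_separation (d : ℕ) (hd : 2 ≤ d)
    (Ga Gb : Set (EuclideanSpace ℝ (Fin d))) (hGa : IsCompact Ga) (hGb : IsCompact Gb)
    (W : Set (EuclideanSpace ℝ (Fin d)))
    (hW : W = {x | x ⟨1, by omega⟩ > |x ⟨0, by omega⟩|})
    (hprec : ∀ a ∈ Ga, ∀ b ∈ Gb, b - a ∈ W) :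
    ∃ δ : ℝ, 0 < δ ∧ ∀ t : ℝ, 0 < t → ∀ a ∈ Ga, ∀ b ∈ Gb, ∀ w ∈ W,
      ((t • a - (w + t • b)) ⟨0, by omega⟩) ^ 2 <
          (∑ j ∈ Finset.univ.erase (⟨0, by omega⟩ : Fin d),
            ((t • a - (w + t • b)) j) ^ 2) ∧
      ‖t • a - (w + t • b)‖ ≥ t * δ := by
  set m := wedgeMargin (⟨0, by omega⟩ : Fin d) ⟨1, by omega⟩
  have hmW : ∀ x ∈ W, 0 < m x := by
    subst hW
    exact fun x hx => sub_pos.mpr hx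
  obtain ⟨δ, hδ, hmδ⟩ := (hGa.prod hGb).exists_forall_le' (a := 0)
    ((continuous_wedgeMargin _ _).comp (continuous_snd.sub continuous_fst)).continuousOn
    fun p hp => hmW _ (hprec p.1 hp.1 p.2 hp.2)
  refine ⟨δ, hδ, fun t ht a ha b hb w hw => ?_⟩
  have hδab : δ ≤ m (b - a) := hmδ (a, b) ⟨ha, hb⟩
  set v := w + t • (b - a)
  have hmv : t * δ < m v :=
    calc t * δ < m w + t * m (b - a) := by
          linarith [hmW w hw, mul_le_mul_of_nonneg_left hδab ht.le]
      _ = m w + m (t • (b - a)) := congrArg (m w + ·) (wedgeMargin_smul _ _ ht.le _).symm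
      _ ≤ m v := wedgeMargin_add_le _ _ _ _
  have hneg : t • a - (w + t • b) = -v := by module
  simp only [hneg, PiLp.neg_apply, neg_sq, norm_neg]
  exact ⟨sq_lt_sum_erase_sq_of_wedgeMargin_pos (by simp [Fin.ext_iff]) ((mul_pos ht hδ).trans hmv),
    (hmv.trans_le (wedgeMargin_le_norm _ _ v)).le⟩
end

section
/- Let d ≥ 1, let H be a complex Hilbert space, let U be a strongly continuous unitary representation of ℝ^d on H, and let D ⊆ H be a dense subset. Then the set of vectors of the form ∫_{ℝ^d} f(x)·U(x)ψ dx (a Bochner integral), where ψ ranges over D and f ranges over the Schwartz functions on ℝ^d whose Fourier transform has compact support, is dense in H. -/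
/-!
Fix a Schwartz function `φ` with `∫ φ = 1` whose Fourier transform is a bump function. Its
dilates `φ_c x = c ^ d • φ (c • x)` still have compactly supported Fourier transform, and the
substitution `y = c • x` turns `∫ φ_c x • U x ψ` into `∫ φ y • U (c⁻¹ • y) ψ`, which tends to
`ψ` as `c → ∞` by dominated convergence, since `U` is uniformly bounded, strongly continuous and
`U 0 = 1`. So every `ψ ∈ D` is a limit of smeared vectors.
-/

open Filter Topology MeasureTheory Module
open scoped FourierTransform RealInnerProductSpace

namespace SchwartzMap

variable {E F : Type*} [NormedAddCommGroup E] [NormedSpace ℝ E] [FiniteDimensional ℝ E]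
  [NormedAddCommGroup F] [NormedSpace ℝ F]

noncomputable def dilate {c : ℝ} (hc : c ≠ 0) (f : 𝓢(E, F)) : 𝓢(E, F) :=
  (c ^ finrank ℝ E) • compCLMOfContinuousLinearEquiv ℝ
    (LinearEquiv.smulOfNeZero ℝ E c hc).toContinuousLinearEquiv f

theorem dilate_apply {c : ℝ} (hc : c ≠ 0) (f : 𝓢(E, F)) (x : E) :
    dilate hc f x = (c ^ finrank ℝ E) • f (c • x) := rfl

end SchwartzMap

section ApproximateIdentity

variable {E F : Type*} [NormedAddCommGroup E] [NormedSpace ℝ E] [FiniteDimensional ℝ E]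
  [MeasurableSpace E] [BorelSpace E] (μ : Measure E) [μ.IsAddHaarMeasure]
  [NormedAddCommGroup F] [NormedSpace ℂ F]

theorem integral_dilate_smul (f : E → ℂ) (g : E → F) {c : ℝ} (hc : 0 < c) :
    ∫ x, ((c ^ finrank ℝ E) • f (c • x)) • g x ∂μ = ∫ y, f y • g (c⁻¹ • y) ∂μ := by
  have h : ∀ x : E, ((c ^ finrank ℝ E) • f (c • x)) • g x
      = (c ^ finrank ℝ E) • (f (c • x) • g (c⁻¹ • c • x)) := by
    intro x
    rw [inv_smul_smul₀ hc.ne', smul_assoc]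
  simp only [h]
  rw [integral_smul, Measure.integral_comp_smul_of_nonneg μ
    (fun y => f y • g (c⁻¹ • y)) c (hR := hc.le), smul_inv_smul₀ (pow_ne_zero _ hc.ne')]

theorem tendsto_integral_dilate_smul [CompleteSpace F] {f : E → ℂ} (hf : Integrable f μ)
    {g : E → F} (hg : Continuous g) {C : ℝ} (hC : ∀ x, ‖g x‖ ≤ C) :
    Tendsto (fun c : ℝ => ∫ x, ((c ^ finrank ℝ E) • f (c • x)) • g x ∂μ) atTop
      (𝓝 ((∫ x, f x ∂μ) • g 0)) := by
  have hlim : Tendsto (fun c : ℝ => ∫ y, f y • g (c⁻¹ • y) ∂μ) atTop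
      (𝓝 ((∫ x, f x ∂μ) • g 0)) := by
    rw [← integral_smul_const]
    refine tendsto_integral_filter_of_dominated_convergence (fun y => ‖f y‖ * C)
      (Eventually.of_forall fun c => ?_) (Eventually.of_forall fun c => ?_)
      (hf.norm.mul_const C) (ae_of_all _ fun y => ?_)
    · exact hf.aestronglyMeasurable.smul
        (hg.comp (continuous_const_smul (c⁻¹ : ℝ))).aestronglyMeasurable
    · exact ae_of_all _ fun y => by
        rw [norm_smul]
        exact mul_le_mul_of_nonneg_left (hC _) (norm_nonneg _)
    · have hscale : Tendsto (fun c : ℝ => c⁻¹ • y) atTop (𝓝 0) := by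
        simpa using (tendsto_inv_atTop_zero (𝕜 := ℝ)).smul_const y
      exact ((hg.tendsto 0).comp hscale).const_smul (f y)
  exact hlim.congr' ((eventually_gt_atTop 0).mono fun c hc => (integral_dilate_smul μ f g hc).symm)

end ApproximateIdentity

section Fourier

variable {E F : Type*} [NormedAddCommGroup E] [InnerProductSpace ℝ E] [FiniteDimensional ℝ E]
  [MeasurableSpace E] [BorelSpace E] [NormedAddCommGroup F] [NormedSpace ℂ F]

theorem Real.fourier_dilate (f : E → F) {c : ℝ} (hc : 0 < c) (ξ : E) :
    𝓕 (fun x => (c ^ finrank ℝ E) • f (c • x)) ξ = 𝓕 f (c⁻¹ • ξ) := by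
  have hphase : ∀ x : E, 𝐞 (-⟪x, ξ⟫) • (c ^ finrank ℝ E) • f (c • x)
      = (c ^ finrank ℝ E) • (𝐞 (-⟪c • x, c⁻¹ • ξ⟫) • f (c • x)) := by
    intro x
    rw [smul_comm, real_inner_smul_left, real_inner_smul_right, mul_inv_cancel_left₀ hc.ne']
  simp only [Real.fourier_eq, hphase]
  rw [integral_smul, Measure.integral_comp_smul_of_nonneg volume
    (fun y => 𝐞 (-⟪y, c⁻¹ • ξ⟫) • f y) c (hR := hc.le), smul_inv_smul₀ (pow_ne_zero _ hc.ne')]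

namespace SchwartzMap

theorem hasCompactSupport_fourier_dilate {c : ℝ} (hc : 0 < c) {f : 𝓢(E, F)}
    (hf : HasCompactSupport (𝓕 (⇑f))) : HasCompactSupport (𝓕 (⇑(dilate hc.ne' f))) := by
  have h : 𝓕 (⇑(dilate hc.ne' f)) = 𝓕 (⇑f) ∘ fun ξ => c⁻¹ • ξ := by
    rw [funext (dilate_apply hc.ne' f)]
    exact funext (Real.fourier_dilate (⇑f) hc)
  rw [h]
  exact hf.comp_isClosedEmbedding
    (Homeomorph.smulOfNeZero c⁻¹ (inv_ne_zero hc.ne')).isClosedEmbedding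

variable (E) in
theorem exists_hasCompactSupport_fourier_integral_eq_one :
    ∃ φ : 𝓢(E, ℂ), HasCompactSupport (𝓕 (⇑φ)) ∧ ∫ x, φ x = 1 := by
  let b : ContDiffBump (0 : E) := ⟨1, 2, one_pos, one_lt_two⟩
  have hG_supp : HasCompactSupport fun x => (b x : ℂ) :=
    b.hasCompactSupport.comp_left Complex.ofReal_zero
  let G : 𝓢(E, ℂ) := hG_supp.toSchwartzMap (Complex.ofRealCLM.contDiff.comp b.contDiff)
  let φ : 𝓢(E, ℂ) := 𝓕⁻ G
  have hφ : 𝓕 (⇑φ) = ⇑G := by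
    rw [← fourier_coe, FourierTransform.fourier_fourierInv_eq]
  refine ⟨φ, hφ ▸ hG_supp, ?_⟩
  calc ∫ x, φ x = 𝓕 (⇑φ) 0 := by simp [Real.fourier_eq]
    _ = 1 := by
      rw [hφ]
      change ((b 0 : ℝ) : ℂ) = 1
      rw [b.one_of_mem_closedBall (Metric.mem_closedBall_self zero_le_one), Complex.ofReal_one]

end SchwartzMap

end Fourier

theorem dense_smeared_vectors_general (d : ℕ)
    {H : Type*} [NormedAddCommGroup H] [InnerProductSpace ℂ H] [CompleteSpace H]
    (U : EuclideanSpace ℝ (Fin d) → H →L[ℂ] H)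
    (hU0 : U 0 = 1)
    (hUunitary : ∀ x, U x ∈ unitary (H →L[ℂ] H))
    (hUcont : ∀ ψ : H, Continuous fun x => U x ψ)
    (D : Set H) (hD : Dense D) :
    Dense {v : H | ∃ ψ ∈ D, ∃ f : SchwartzMap (EuclideanSpace ℝ (Fin d)) ℂ,
      HasCompactSupport (𝓕 (⇑f)) ∧ v = ∫ x, f x • U x ψ} := by
  obtain ⟨φ, hφ_fourier, hφ_integral⟩ :=
    SchwartzMap.exists_hasCompactSupport_fourier_integral_eq_one (EuclideanSpace ℝ (Fin d))
  refine dense_closure.1 (hD.mono fun ψ hψ => ?_)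
  have hlim := tendsto_integral_dilate_smul volume φ.integrable (hUcont ψ)
    (fun x => (ContinuousLinearMap.norm_map_of_mem_unitary (hUunitary x) ψ).le)
  rw [hφ_integral, one_smul, hU0, one_apply_eq_self] at hlim
  exact mem_closure_of_tendsto hlim <| (eventually_gt_atTop 0).mono fun c hc =>
    ⟨ψ, hψ, φ.dilate hc.ne', SchwartzMap.hasCompactSupport_fourier_dilate hc hφ_fourier, rfl⟩

/-- Density claim from the proof of Lemma 3.1(b) of the paper: given a strongly continuous
unitary representation `U` of `ℝ^d` (`d ≥ 1`) on a complex Hilbert space `H` and a dense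
subset `D ⊆ H`, the vectors `∫ f(x) U(x) ψ dx`, with `ψ ∈ D` and `f` Schwartz with
compactly supported Fourier transform, form a dense subset of `H`. -/
theorem dense_smeared_vectors (d : ℕ) (hd : 1 ≤ d)
    {H : Type*} [NormedAddCommGroup H] [InnerProductSpace ℂ H] [CompleteSpace H]
    (U : EuclideanSpace ℝ (Fin d) → H →L[ℂ] H)
    (hU0 : U 0 = 1)
    (hUadd : ∀ x y, U (x + y) = U x * U y)
    (hUunitary : ∀ x, U x ∈ unitary (H →L[ℂ] H))
    (hUcont : ∀ ψ : H, Continuous fun x => U x ψ)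
    (D : Set H) (hD : Dense D) :
    Dense {v : H | ∃ ψ ∈ D, ∃ f : SchwartzMap (EuclideanSpace ℝ (Fin d)) ℂ,
      HasCompactSupport (𝓕 (⇑f)) ∧ v = ∫ x, f x • U x ψ} :=
  dense_smeared_vectors_general d U hU0 hUunitary hUcont D hD
end

section
/- Let m > 0 and define ω(p) = √(p² + m²) for p ∈ ℝ. Let n ≥ 3, let p₁, p₂ ∈ ℝ and q₁, …, qₙ ∈ ℝ satisfy the conservation laws p₁ + p₂ = q₁ + ⋯ + qₙ and ω(p₁) + ω(p₂) = ω(q₁) + ⋯ + ω(qₙ). Then max(p₁, p₂) > qᵢ for every i ∈ {1, …, n}, and min(p₁, p₂) < qᵢ for every i ∈ {1, …, n}. -/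
lemma lt_sqrt_aux (m p : ℝ) (hm : 0 < m) : p < Real.sqrt (p ^ 2 + m ^ 2) := by
  have h : Real.sqrt (p ^ 2 + m ^ 2) ^ 2 = p ^ 2 + m ^ 2 :=
    Real.sq_sqrt (by positivity)
  nlinarith [Real.sqrt_nonneg (p ^ 2 + m ^ 2), sq_nonneg p]

lemma u_mono (m a b : ℝ) (hm : 0 < m) (hab : a ≤ b) :
    Real.sqrt (a ^ 2 + m ^ 2) + a ≤ Real.sqrt (b ^ 2 + m ^ 2) + b := by
  have ha : Real.sqrt (a ^ 2 + m ^ 2) ^ 2 = a ^ 2 + m ^ 2 := Real.sq_sqrt (by positivity)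
  have hb : Real.sqrt (b ^ 2 + m ^ 2) ^ 2 = b ^ 2 + m ^ 2 := Real.sq_sqrt (by positivity)
  have hb' := lt_sqrt_aux m (-b) hm
  rw [neg_sq] at hb'
  have h2 : Real.sqrt (a ^ 2 + m ^ 2) ≤ Real.sqrt (b ^ 2 + m ^ 2) + (b - a) := by
    have hnn : (0:ℝ) ≤ Real.sqrt (b ^ 2 + m ^ 2) + (b - a) := by
      have := Real.sqrt_nonneg (b ^ 2 + m ^ 2); linarith
    have hle : a ^ 2 + m ^ 2 ≤ (Real.sqrt (b ^ 2 + m ^ 2) + (b - a)) ^ 2 := by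
      nlinarith [hb, mul_nonneg (sub_nonneg.2 hab)
        (show (0:ℝ) ≤ Real.sqrt (b ^ 2 + m ^ 2) + b by linarith)]
    calc Real.sqrt (a ^ 2 + m ^ 2) ≤ Real.sqrt ((Real.sqrt (b ^ 2 + m ^ 2) + (b - a)) ^ 2) :=
          Real.sqrt_le_sqrt hle
      _ = Real.sqrt (b ^ 2 + m ^ 2) + (b - a) := Real.sqrt_sq hnn
  linarith

lemma key_lemma (m : ℝ) (hm : 0 < m) (n : ℕ) (hn : 3 ≤ n)
    (p₁ p₂ : ℝ) (q : Fin n → ℝ)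
    (hmom : p₁ + p₂ = ∑ i, q i)
    (hen : Real.sqrt (p₁ ^ 2 + m ^ 2) + Real.sqrt (p₂ ^ 2 + m ^ 2)
        = ∑ i, Real.sqrt ((q i) ^ 2 + m ^ 2))
    (h12 : p₁ ≤ p₂) (j : Fin n) (hj : p₂ ≤ q j) : False := by
  set u : ℝ → ℝ := fun x => Real.sqrt (x ^ 2 + m ^ 2) + x with hu_def
  set v : ℝ → ℝ := fun x => Real.sqrt (x ^ 2 + m ^ 2) - x with hv_def
  have hu : ∀ x, 0 < u x := fun x => by
    have := lt_sqrt_aux m (-x) hm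
    rw [neg_sq] at this
    simp only [hu_def]; linarith
  have hv : ∀ x, 0 < v x := fun x => by
    have := lt_sqrt_aux m x hm
    simp only [hv_def]; linarith
  have huv : ∀ x, u x * v x = m ^ 2 := fun x => by
    have h : Real.sqrt (x ^ 2 + m ^ 2) ^ 2 = x ^ 2 + m ^ 2 := Real.sq_sqrt (by positivity)
    show (Real.sqrt (x ^ 2 + m ^ 2) + x) * (Real.sqrt (x ^ 2 + m ^ 2) - x) = m ^ 2
    nlinarith [h]
  have hsumu : u p₁ + u p₂ = ∑ i, u (q i) := by
    simp only [hu_def]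
    rw [Finset.sum_add_distrib]
    rw [← hmom, ← hen]; ring
  have hsumv : v p₁ + v p₂ = ∑ i, v (q i) := by
    simp only [hv_def]
    rw [Finset.sum_sub_distrib]
    rw [← hmom, ← hen]; ring
  set S := ∑ i ∈ Finset.univ.erase j, u (q i) with hS_def
  set T := ∑ i ∈ Finset.univ.erase j, v (q i) with hT_def
  have hS : u (q j) + S = u p₁ + u p₂ := by
    rw [hsumu, hS_def]
    exact Finset.add_sum_erase _ (fun i => u (q i)) (Finset.mem_univ j)
  have hT : v (q j) + T = v p₁ + v p₂ := by
    rw [hsumv, hT_def]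
    exact Finset.add_sum_erase _ (fun i => v (q i)) (Finset.mem_univ j)
  have hu12 : u p₁ ≤ u p₂ := u_mono m p₁ p₂ hm h12
  have huj : u p₂ ≤ u (q j) := u_mono m p₂ (q j) hm hj
  -- two distinct indices in the erased set
  have hcard : 1 < (Finset.univ.erase j).card := by
    rw [Finset.card_erase_of_mem (Finset.mem_univ j), Finset.card_univ, Fintype.card_fin]
    omega
  obtain ⟨a, ha, b, hb, hab⟩ := Finset.one_lt_card.mp hcard
  have hsub : ({a, b} : Finset (Fin n)) ⊆ Finset.univ.erase j := by
    intro x hx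
    simp only [Finset.mem_insert, Finset.mem_singleton] at hx
    rcases hx with rfl | rfl <;> assumption
  have hSab : u (q a) + u (q b) ≤ S := by
    have h := Finset.sum_le_sum_of_subset_of_nonneg hsub (fun i _ _ => (hu (q i)).le)
    rwa [Finset.sum_pair hab] at h
  have hTab : v (q a) + v (q b) ≤ T := by
    have h := Finset.sum_le_sum_of_subset_of_nonneg hsub (fun i _ _ => (hv (q i)).le)
    rwa [Finset.sum_pair hab] at h
  -- cross AM–GM: u(qa)v(qb) + u(qb)v(qa) ≥ 2 m²
  have hcross : 2 * m ^ 2 ≤ u (q a) * v (q b) + u (q b) * v (q a) := by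
    nlinarith [huv (q a), huv (q b), hu (q a), hu (q b), hv (q a), hv (q b),
      sq_nonneg (u (q a) * v (q b) - m ^ 2), mul_pos (hu (q a)) (hv (q b))]
  -- lower bound on S*T
  have hST_lo : 4 * m ^ 2 ≤ S * T := by
    have h1 : (u (q a) + u (q b)) * (v (q a) + v (q b)) ≤ S * T := by
      apply mul_le_mul hSab hTab (by linarith [hv (q a), hv (q b)])
      linarith [hu (q a), hu (q b), hSab]
    nlinarith [huv (q a), huv (q b), hcross]
  -- upper bound on S*T
  have hS_le : S ≤ u p₁ := by linarith
  have hT_le : T ≤ v p₁ + v p₂ := by linarith [hv (q j)]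
  have hT_pos : 0 < T := by linarith [hv (q a), hv (q b)]
  have hu1v2 : u p₁ * v p₂ ≤ m ^ 2 := by
    have := mul_le_mul_of_nonneg_right hu12 (hv p₂).le
    rw [huv p₂] at this; exact this
  have hST_hi : S * T ≤ 2 * m ^ 2 := by
    have h1 : S * T ≤ u p₁ * T := mul_le_mul_of_nonneg_right hS_le hT_pos.le
    have h2 : u p₁ * T ≤ u p₁ * (v p₁ + v p₂) :=
      mul_le_mul_of_nonneg_left hT_le (hu p₁).le
    have h3 : u p₁ * (v p₁ + v p₂) = m ^ 2 + u p₁ * v p₂ := by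
      rw [mul_add, huv p₁]
    linarith
  have hm2 : 0 < m ^ 2 := by positivity
  linarith

/-- Two-dimensional kinematics (proof of Theorem 4 of the paper): if two mass-`m`
particles with momenta `p₁, p₂` and `n ≥ 3` mass-`m` particles with momenta `q₁, …, qₙ`
have the same total momentum and the same total energy `ω(p) = √(p² + m²)`, then
`max(p₁,p₂)` is strictly larger, and `min(p₁,p₂)` strictly smaller, than every `qᵢ`. -/
theorem two_to_n_kinematics (m : ℝ) (hm : 0 < m) (n : ℕ) (hn : 3 ≤ n)
    (p₁ p₂ : ℝ) (q : Fin n → ℝ)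
    (hmom : p₁ + p₂ = ∑ i, q i)
    (hen : Real.sqrt (p₁ ^ 2 + m ^ 2) + Real.sqrt (p₂ ^ 2 + m ^ 2)
        = ∑ i, Real.sqrt ((q i) ^ 2 + m ^ 2)) :
    ∀ i : Fin n, max p₁ p₂ > q i ∧ min p₁ p₂ < q i := by
  intro i
  constructor
  · by_contra h
    push_neg at h
    rcases le_total p₁ p₂ with h12 | h12
    · exact key_lemma m hm n hn p₁ p₂ q hmom hen h12 i
        (le_trans (le_max_right p₁ p₂) h)
    · exact key_lemma m hm n hn p₂ p₁ q (by linarith) (by linarith) h12 i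
        (le_trans (le_max_left p₁ p₂) h)
  · by_contra h
    push_neg at h
    rcases le_total p₁ p₂ with h12 | h12
    · refine key_lemma m hm n hn (-p₂) (-p₁) (fun k => -q k) ?_ ?_ (by linarith) i ?_
      · simp only [Finset.sum_neg_distrib]; linarith
      · simp only [neg_sq]; linarith [hen]
      · have : q i ≤ p₁ := le_trans h (min_le_left p₁ p₂)
        simpa using neg_le_neg this
    · refine key_lemma m hm n hn (-p₁) (-p₂) (fun k => -q k) ?_ ?_ (by linarith) i ?_
      · simp only [Finset.sum_neg_distrib]; linarith
      · simp only [neg_sq]; linarith [hen]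
      · have : q i ≤ p₂ := le_trans h (min_le_right p₁ p₂)
        simpa using neg_le_neg this
end

section
/- Let n ≥ 3 and let u₁, u₂ and v₁, …, vₙ be strictly positive real numbers satisfying u₁ + u₂ = v₁ + ⋯ + vₙ and 1/u₁ + 1/u₂ = 1/v₁ + ⋯ + 1/vₙ. Then max(u₁, u₂) > vᵢ for every i ∈ {1, …, n}, and min(u₁, u₂) < vᵢ for every i ∈ {1, …, n}. -/
/-!
Remove one `vᵢ` with `vᵢ ≥ max(u₁, u₂)`. The remaining `n - 1 ≥ 2` numbers have sum
`u₁ + u₂ - vᵢ ≤ min(u₁, u₂)` and sum of reciprocals `≤ 1/u₁ + 1/u₂ ≤ 2 / min(u₁, u₂)`, so the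
product of these sums is at most `2`, whereas Cauchy–Schwarz bounds it below by `(n - 1)² ≥ 4`.
The bound on `min(u₁, u₂)` is the same statement for the reciprocals `1/u₁, 1/u₂, 1/vᵢ`,
which satisfy the same two equations with their roles exchanged.
-/

open Finset

lemma Finset.sq_card_le_sum_mul_sum_one_div {ι : Type*} (s : Finset ι) {v : ι → ℝ}
    (hv : ∀ i ∈ s, 0 < v i) : (#s : ℝ) ^ 2 ≤ (∑ i ∈ s, v i) * ∑ i ∈ s, 1 / v i := by
  have h := sum_sq_le_sum_mul_sum_of_sq_le_mul s (r := fun _ ↦ (1 : ℝ))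
    (fun i hi ↦ (hv i hi).le) (fun i hi ↦ (one_div_pos.2 (hv i hi)).le)
    (fun i hi ↦ by rw [mul_one_div_cancel (hv i hi).ne', one_pow])
  simpa using h

theorem lt_max_of_sum_eq_of_sum_one_div_eq {ι : Type*} [Fintype ι] (hcard : 3 ≤ Fintype.card ι)
    {u₁ u₂ : ℝ} {v : ι → ℝ} (hu₁ : 0 < u₁) (hu₂ : 0 < u₂) (hv : ∀ i, 0 < v i)
    (hsum : u₁ + u₂ = ∑ i, v i) (hinv : 1 / u₁ + 1 / u₂ = ∑ i, 1 / v i) (i : ι) :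
    v i < max u₁ u₂ := by
  classical
  by_contra! hmax
  set s := univ.erase i
  set m := min u₁ u₂
  have hm : 0 < m := lt_min hu₁ hu₂
  have hrest : ∑ j ∈ s, v j ≤ m := by
    rw [sum_erase_eq_sub (mem_univ i), ← hsum, ← min_add_max u₁ u₂]
    linarith
  have hrest_inv : ∑ j ∈ s, 1 / v j ≤ 2 / m := by
    rw [sum_erase_eq_sub (mem_univ i), ← hinv]
    have h₁ : 1 / u₁ ≤ 1 / m := one_div_le_one_div_of_le hm (min_le_left _ _)
    have h₂ : 1 / u₂ ≤ 1 / m := one_div_le_one_div_of_le hm (min_le_right _ _)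
    have hvi : 0 < 1 / v i := one_div_pos.2 (hv i)
    linarith [show 1 / m + 1 / m = 2 / m by ring]
  have hcard' : (4 : ℝ) ≤ (#s : ℝ) ^ 2 := by
    have : 2 ≤ #s := by rw [card_erase_of_mem (mem_univ i), card_univ]; omega
    have : (2 : ℝ) ≤ #s := by exact_mod_cast this
    nlinarith
  have hinv_nonneg : 0 ≤ ∑ j ∈ s, 1 / v j :=
    sum_nonneg fun j _ ↦ (one_div_pos.2 (hv j)).le
  have hprod : (∑ j ∈ s, v j) * ∑ j ∈ s, 1 / v j ≤ 2 :=
    calc _ ≤ m * (2 / m) := mul_le_mul hrest hrest_inv hinv_nonneg hm.le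
      _ = 2 := by field_simp
  linarith [s.sq_card_le_sum_mul_sum_one_div (fun j _ ↦ hv j)]

/-- Light-cone–variable form of the two-dimensional no-production constraint (Section 4
of the paper): if positive reals satisfy `u₁ + u₂ = v₁ + ⋯ + vₙ` and
`1/u₁ + 1/u₂ = 1/v₁ + ⋯ + 1/vₙ` with `n ≥ 3`, then `max(u₁,u₂) > vᵢ` and
`min(u₁,u₂) < vᵢ` for every `i`. -/
theorem lightcone_two_to_n (n : ℕ) (hn : 3 ≤ n) (u₁ u₂ : ℝ) (v : Fin n → ℝ)
    (hu₁ : 0 < u₁) (hu₂ : 0 < u₂) (hv : ∀ i, 0 < v i)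
    (hsum : u₁ + u₂ = ∑ i, v i)
    (hinv : 1 / u₁ + 1 / u₂ = ∑ i, 1 / v i) :
    ∀ i : Fin n, max u₁ u₂ > v i ∧ min u₁ u₂ < v i := by
  have hcard : 3 ≤ Fintype.card (Fin n) := by rwa [Fintype.card_fin]
  intro i
  refine ⟨lt_max_of_sum_eq_of_sum_one_div_eq hcard hu₁ hu₂ hv hsum hinv i, ?_⟩
  have hinv_max : 1 / v i < max (1 / u₁) (1 / u₂) :=
    lt_max_of_sum_eq_of_sum_one_div_eq hcard (one_div_pos.2 hu₁) (one_div_pos.2 hu₂)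
      (fun j ↦ one_div_pos.2 (hv j)) hinv (by simpa only [one_div_one_div] using hsum) i
  rcases lt_max_iff.1 hinv_max with h | h
  · exact min_lt_of_left_lt ((one_div_lt_one_div (hv i) hu₁).1 h)
  · exact min_lt_of_right_lt ((one_div_lt_one_div (hv i) hu₂).1 h)
end
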